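/- arXiv:2204.07624 — 2 statements merged into one kernel-verified Lean document; each statement's English description precedes it below -/
import Mathlib

section
/- Let n ≥ 1, let Ω ⊆ ℝⁿ be open, and let u : ℝⁿ → ℝ be C^∞ on Ω with ∇u(x) ≠ 0 for all x ∈ Ω. For 1 ≤ r ≤ n−1, the vector field V(x) := T_{r−1}(∇²u(x)) · ∇u(x) / ‖∇u(x)‖^r satisfies, at every x ∈ Ω, div V(x) = r · ⟨T_r(∇²u(x))·∇u(x), ∇u(x)⟩ / ‖∇u(x)‖^{r+2} = r · σ_r(κ^u)(x). (This is Lemma 2.1 of the paper in Euclidean space, where the term ⟨div T_{r−1}, ∇u/|∇u|^r⟩ vanishes because Newton tensors of Hessians are divergence-free in flat space.) -/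
open MeasureTheory

noncomputable section

/-- `σ_i(A)`: coefficients of the characteristic polynomial
`det(λ I − A) = ∑ (−1)^i σ_i(A) λ^{n−i}`. -/
def matSigma (n : ℕ) (A : Matrix (Fin n) (Fin n) ℝ) (i : ℕ) : ℝ :=
  (-1 : ℝ) ^ i * (Matrix.charpoly A).coeff (n - i)

/-- Newton operators `T_0 = I`, `T_r = σ_r(A)·I − T_{r−1}(A)·A`. -/
def newtonOp (n : ℕ) (A : Matrix (Fin n) (Fin n) ℝ) : ℕ → Matrix (Fin n) (Fin n) ℝ
  | 0 => 1
  | r + 1 => matSigma n A (r + 1) • (1 : Matrix (Fin n) (Fin n) ℝ) - newtonOp n A r * A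

/-- Hessian matrix of `u` at `x` in standard coordinates. -/
def hessianMatrix (n : ℕ) (u : EuclideanSpace ℝ (Fin n) → ℝ)
    (x : EuclideanSpace ℝ (Fin n)) : Matrix (Fin n) (Fin n) ℝ :=
  Matrix.of fun i j =>
    iteratedFDeriv ℝ 2 u x ![EuclideanSpace.single i 1, EuclideanSpace.single j 1]

/-- `σ_r(κ^u)(x) = ⟨T_r(∇²u(x))·∇u(x), ∇u(x)⟩ / ‖∇u(x)‖^{r+2}`. -/
def sigmaKappa (n : ℕ) (r : ℕ) (u : EuclideanSpace ℝ (Fin n) → ℝ)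
    (x : EuclideanSpace ℝ (Fin n)) : ℝ :=
  dotProduct
    ((newtonOp n (hessianMatrix n u x) r).mulVec fun i => gradient u x i)
    (fun i => gradient u x i) / ‖gradient u x‖ ^ (r + 2)

open Matrix Polynomial Finset

namespace NewtonAux

variable {n : ℕ} (A : Matrix (Fin n) (Fin n) ℝ)

/-- coefficient matrices of the adjugate of the charmatrix -/
def Madj (m : ℕ) : Matrix (Fin n) (Fin n) ℝ :=
  Matrix.of fun i j => ((Matrix.charmatrix A).adjugate i j).coeff m

lemma commute_newton (k : ℕ) : A * newtonOp n A k = newtonOp n A k * A := by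
  induction k with
  | zero => simp [newtonOp]
  | succ k ih =>
    simp only [newtonOp, Matrix.mul_sub, Matrix.sub_mul, Matrix.mul_smul, Matrix.smul_mul,
      Matrix.mul_one, Matrix.one_mul, ← Matrix.mul_assoc, ih]

lemma transpose_newton (hA : Aᵀ = A) (k : ℕ) : (newtonOp n A k)ᵀ = newtonOp n A k := by
  induction k with
  | zero => simp [newtonOp]
  | succ k ih =>
    simp only [newtonOp, Matrix.transpose_sub, Matrix.transpose_smul, Matrix.transpose_one,
      Matrix.transpose_mul, hA, ih]
    rw [commute_newton]

lemma entry_eq (i j : Fin n) :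
    ((Matrix.charmatrix A).adjugate * Matrix.charmatrix A) i j
      = (Matrix.charmatrix A).adjugate i j * X
        - ∑ p, (Matrix.charmatrix A).adjugate i p * C (A p j) := by
  rw [Matrix.mul_apply]
  simp only [Matrix.charmatrix_apply, mul_sub, Finset.sum_sub_distrib, Matrix.diagonal_apply,
    mul_ite, mul_zero]
  rw [Finset.sum_ite_eq' Finset.univ j fun p => (Matrix.charmatrix A).adjugate i p * X]
  simp

lemma entry_eq' (i j : Fin n) :
    ((Matrix.charmatrix A).adjugate * Matrix.charmatrix A) i j
      = if i = j then Matrix.charpoly A else 0 := by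
  rw [Matrix.adjugate_mul]
  simp [Matrix.smul_apply, Matrix.one_apply, Matrix.charpoly, smul_eq_mul, mul_ite, mul_one,
    mul_zero]

/-- entrywise recursion from `adjugate_mul` -/
lemma Madj_rec (m : ℕ) :
    Madj A m = (Matrix.charpoly A).coeff (m + 1) • (1 : Matrix (Fin n) (Fin n) ℝ)
      + Madj A (m + 1) * A := by
  ext i j
  have h := congrArg (fun p => Polynomial.coeff p (m+1)) ((entry_eq A i j).symm.trans (entry_eq' A i j))
  simp only [coeff_sub, coeff_mul_X, Polynomial.finset_sum_coeff, coeff_mul_C, apply_ite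
    (fun p => Polynomial.coeff p (m+1)), coeff_zero] at h
  have : Madj A m i j - ∑ p, Madj A (m+1) i p * A p j
      = (Matrix.charpoly A).coeff (m+1) * (1 : Matrix (Fin n) (Fin n) ℝ) i j := by
    simpa [Madj, Matrix.one_apply, eq_comm] using h
  have goal : Madj A m i j = (Matrix.charpoly A).coeff (m+1) * (1 : Matrix (Fin n) (Fin n) ℝ) i j
      + ∑ p, Madj A (m+1) i p * A p j := by linarith
  simpa [Matrix.add_apply, Matrix.smul_apply, Matrix.mul_apply, smul_eq_mul] using goal

lemma Madj_rec_zero :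
    (Matrix.charpoly A).coeff 0 • (1 : Matrix (Fin n) (Fin n) ℝ) + Madj A 0 * A = 0 := by
  ext i j
  have h := congrArg (fun p => Polynomial.coeff p 0) ((entry_eq A i j).symm.trans (entry_eq' A i j))
  simp only [coeff_sub, Polynomial.coeff_mul_X_zero, Polynomial.finset_sum_coeff, coeff_mul_C,
    apply_ite (fun p => Polynomial.coeff p 0), coeff_zero, zero_sub] at h
  have : -(∑ p, Madj A 0 i p * A p j)
      = (Matrix.charpoly A).coeff 0 * (1 : Matrix (Fin n) (Fin n) ℝ) i j := by
    simpa [Madj, Matrix.one_apply, eq_comm] using h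
  have goal : (Matrix.charpoly A).coeff 0 * (1 : Matrix (Fin n) (Fin n) ℝ) i j
      + ∑ p, Madj A 0 i p * A p j = 0 := by linarith
  simpa [Matrix.add_apply, Matrix.smul_apply, Matrix.mul_apply, smul_eq_mul] using goal

lemma natDegree_adjugate_charmatrix_le (i j : Fin n) :
    ((Matrix.charmatrix A).adjugate i j).natDegree ≤ n - 1 := by
  rw [Matrix.adjugate_apply, Matrix.det_apply]
  apply Polynomial.natDegree_sum_le_of_forall_le
  intro σ _
  have : ((Equiv.Perm.sign σ : ℤ) • ∏ p, ((Matrix.charmatrix A).updateRow j (Pi.single i 1)) (σ p) p).natDegree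
      ≤ (∏ p, ((Matrix.charmatrix A).updateRow j (Pi.single i 1)) (σ p) p).natDegree := by
    rcases Int.units_eq_one_or (Equiv.Perm.sign σ) with h | h <;> simp [h]
  refine le_trans this ?_
  refine le_trans (Polynomial.natDegree_prod_le _ _) ?_
  have hterm : ∀ p : Fin n,
      (((Matrix.charmatrix A).updateRow j (Pi.single i 1)) (σ p) p).natDegree
        ≤ if σ p = j then 0 else 1 := by
    intro p
    by_cases h : σ p = j
    · simp only [h, if_true, Matrix.updateRow_apply, if_pos rfl]
      rcases eq_or_ne p i with h' | h' <;> simp [Pi.single_apply, h']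
    · simp only [if_neg h, Matrix.updateRow_apply, if_neg h, Matrix.charmatrix_apply]
      rcases eq_or_ne p (σ p) with h' | h'
      · refine le_trans (Polynomial.natDegree_sub_le _ _) ?_
        simp [Matrix.diagonal_apply, ← h', Polynomial.natDegree_C]
      · refine le_trans (Polynomial.natDegree_sub_le _ _) ?_
        simp [Matrix.diagonal_apply, Ne.symm h', Polynomial.natDegree_C]
  refine le_trans (Finset.sum_le_sum fun p _ => hterm p) ?_
  have hσj : σ (σ.symm j) = j := σ.apply_symm_apply j
  calc ∑ p, (if σ p = j then 0 else 1)
      = ∑ p ∈ Finset.univ.erase (σ.symm j), (if σ p = j then 0 else 1) + (if σ (σ.symm j) = j then 0 else 1) := by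
        rw [Finset.sum_erase_add _ _ (Finset.mem_univ _)]
    _ ≤ (Finset.univ.erase (σ.symm j)).card * 1 + 0 := by
        refine add_le_add ?_ (by simp [hσj])
        refine le_trans (Finset.sum_le_card_nsmul _ _ 1 fun p _ => by split <;> simp) (by simp)
    _ ≤ n - 1 := by
        simp [Finset.card_erase_of_mem, Finset.card_univ]

lemma Madj_zero_of_le (m : ℕ) (hm : n ≤ m) : Madj A m = 0 := by
  ext i j
  have h1 : 1 ≤ n := Nat.one_le_iff_ne_zero.mpr (by rintro rfl; exact i.elim0)
  have := natDegree_adjugate_charmatrix_le A i j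
  have hlt : ((Matrix.charmatrix A).adjugate i j).natDegree < m := by omega
  simp [Madj, Polynomial.coeff_eq_zero_of_natDegree_lt hlt]

lemma charpoly_coeff_card :
    (Matrix.charpoly A).coeff n = 1 := by
  have h := (Matrix.charpoly_monic A).coeff_natDegree
  rwa [Matrix.charpoly_natDegree_eq_dim, Fintype.card_fin] at h

lemma Madj_top (hn : 1 ≤ n) : Madj A (n - 1) = 1 := by
  have h := Madj_rec A (n - 1)
  rw [Nat.sub_add_cancel hn] at h
  rw [h, Madj_zero_of_le A n le_rfl, charpoly_coeff_card]
  simp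

lemma newton_eq_Madj (hn : 1 ≤ n) (k : ℕ) (hk : k ≤ n - 1) :
    newtonOp n A k = ((-1 : ℝ) ^ k) • Madj A (n - 1 - k) := by
  induction k with
  | zero => simpa [newtonOp] using (Madj_top A hn).symm
  | succ k ih =>
    have hk' : k ≤ n - 1 := le_of_lt (Nat.lt_of_lt_of_le (Nat.lt_succ_self k) hk)
    have ihh := ih hk'
    have hrec := Madj_rec A (n - 1 - (k+1))
    have hidx : n - 1 - (k+1) + 1 = n - 1 - k := by omega
    have hidx2 : n - 1 - (k+1) + 1 = n - (k+1) := by omega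
    rw [hidx2] at hrec
    show matSigma n A (k + 1) • (1 : Matrix (Fin n) (Fin n) ℝ) - newtonOp n A k * A = _
    have hms : matSigma n A (k+1) = (-1:ℝ)^(k+1) * (Matrix.charpoly A).coeff (n - (k+1)) := rfl
    have hidx3 : n - 1 - k = n - (k+1) := by omega
    rw [hidx3] at ihh
    rw [ihh, hrec, hms, Matrix.smul_mul, smul_add, smul_smul]
    have hsg : ((-1:ℝ)^(k+1)) = -((-1:ℝ)^k) := by ring
    rw [hsg]
    module

lemma newton_top (hn : 1 ≤ n) : newtonOp n A n = 0 := by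
  obtain ⟨m, rfl⟩ : ∃ m, n = m + 1 := ⟨n - 1, by omega⟩
  show matSigma (m+1) A (m + 1) • (1 : Matrix _ _ ℝ) - newtonOp (m+1) A m * A = 0
  have h1 : newtonOp (m+1) A m = ((-1:ℝ)^m) • Madj A 0 := by
    have := newton_eq_Madj A hn m (by omega)
    simpa using this
  have hms : matSigma (m+1) A (m+1) = (-1:ℝ)^(m+1) * (Matrix.charpoly A).coeff 0 := by
    simp [matSigma]
  rw [h1, hms, Matrix.smul_mul]
  have h0 := Madj_rec_zero A
  have hMA : Madj A 0 * A = -((Matrix.charpoly A).coeff 0 • (1 : Matrix (Fin (m+1)) (Fin (m+1)) ℝ)) :=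
    eq_neg_of_add_eq_zero_right h0
  rw [hMA]
  have hsg : ((-1:ℝ)^(m+1)) = -((-1:ℝ)^m) := by ring
  rw [hsg]
  module

abbrev Mpi (n : ℕ) := Fin n → Fin n → ℝ

def detML (n : ℕ) : MultilinearMap ℝ (fun _ : Fin n => (Fin n → ℝ)) ℝ :=
  (Matrix.detRowAlternating : (Fin n → ℝ) [⋀^Fin n]→ₗ[ℝ] ℝ).toMultilinearMap

lemma detML_apply (M : Mpi n) : detML n M = (Matrix.of M).det := rfl

lemma detML_bound (M : Mpi n) :
    ‖detML n M‖ ≤ (Nat.factorial n : ℝ) * ∏ i, ‖M i‖ := by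
  rw [detML_apply, Matrix.det_apply]
  refine le_trans (norm_sum_le _ _) ?_
  have hcard : (Finset.univ : Finset (Equiv.Perm (Fin n))).card = Nat.factorial n := by
    simp [Finset.card_univ, Fintype.card_perm, Fintype.card_fin]
  calc ∑ σ : Equiv.Perm (Fin n), ‖(Equiv.Perm.sign σ : ℤ) • ∏ p, Matrix.of M (σ p) p‖
      ≤ ∑ _σ : Equiv.Perm (Fin n), ∏ i, ‖M i‖ := by
        refine Finset.sum_le_sum fun σ _ => ?_
        have h1 : ‖(Equiv.Perm.sign σ : ℤ) • ∏ p, Matrix.of M (σ p) p‖ = ‖∏ p, Matrix.of M (σ p) p‖ := by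
          rcases Int.units_eq_one_or (Equiv.Perm.sign σ) with h | h <;> simp [h]
        rw [h1]
        rw [norm_prod]
        have : ∀ p : Fin n, ‖Matrix.of M (σ p) p‖ ≤ ‖M (σ p)‖ := fun p => norm_le_pi_norm (M (σ p)) p
        refine le_trans (Finset.prod_le_prod (fun p _ => norm_nonneg _) fun p _ => this p) ?_
        rw [← Equiv.prod_comp σ (fun i => ‖M i‖)]
    _ = (Nat.factorial n : ℝ) * ∏ i, ‖M i‖ := by
        rw [Finset.sum_const, hcard, nsmul_eq_mul]

def detCML (n : ℕ) : ContinuousMultilinearMap ℝ (fun _ : Fin n => (Fin n → ℝ)) ℝ :=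
  (detML n).mkContinuous (Nat.factorial n : ℝ) detML_bound

lemma detCML_apply (M : Mpi n) : detCML n M = (Matrix.of M).det := rfl

lemma det_updateRow_eq (A : Matrix (Fin n) (Fin n) ℝ) (i : Fin n) (c : Fin n → ℝ) :
    (A.updateRow i c).det = ∑ j, A.adjugate j i * c j := by
  have h1 : (A.updateRow i c).det = (Aᵀ.updateCol i c).det := by
    rw [Matrix.updateCol_transpose, Matrix.det_transpose]
  rw [h1, ← Matrix.cramer_apply, Matrix.cramer_eq_adjugate_mulVec, ← Matrix.adjugate_transpose]
  simp [Matrix.mulVec, dotProduct, Matrix.transpose_apply, mul_comm]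

lemma hasFDerivAt_det (M : Mpi n) :
    HasFDerivAt (fun N : Mpi n => (Matrix.of N).det) ((detCML n).linearDeriv M) M :=
  (detCML n).hasFDerivAt M

lemma linearDeriv_det_apply (M B : Mpi n) :
    (detCML n).linearDeriv M B = Matrix.trace ((Matrix.of M).adjugate * Matrix.of B) := by
  rw [ContinuousMultilinearMap.linearDeriv_apply]
  have h1 : ∀ i, detCML n (Function.update M i (B i)) = ((Matrix.of M).updateRow i (B i)).det := by
    intro i
    rw [detCML_apply]
    congr 1
  simp_rw [h1, det_updateRow_eq]
  simp only [Matrix.trace, Matrix.diag, Matrix.mul_apply, Matrix.of_apply]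
  exact Finset.sum_comm


lemma map_charmatrix_eval (A : Matrix (Fin n) (Fin n) ℝ) (t : ℝ) :
    (Polynomial.evalRingHom t).mapMatrix (Matrix.charmatrix A)
      = t • (1 : Matrix (Fin n) (Fin n) ℝ) - A := by
  ext i j
  simp [Matrix.charmatrix_apply, Matrix.diagonal_apply, Matrix.one_apply, Matrix.smul_apply,
    Matrix.sub_apply, apply_ite (Polynomial.eval t)]

lemma det_smul_one_sub (A : Matrix (Fin n) (Fin n) ℝ) (t : ℝ) :
    (t • (1 : Matrix (Fin n) (Fin n) ℝ) - A).det
      = ∑ m ∈ Finset.range (n + 1), (Matrix.charpoly A).coeff m * t ^ m := by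
  have h1 : (Matrix.charpoly A).eval t = (t • (1 : Matrix (Fin n) (Fin n) ℝ) - A).det := by
    rw [Matrix.charpoly, ← map_charmatrix_eval A t]
    exact RingHom.map_det (Polynomial.evalRingHom t) (Matrix.charmatrix A)
  rw [← h1, Polynomial.eval_eq_sum_range' (n := n + 1)
    (by rw [Matrix.charpoly_natDegree_eq_dim, Fintype.card_fin]; omega) t]

lemma adjugate_smul_one_sub (A : Matrix (Fin n) (Fin n) ℝ) (hn : 1 ≤ n) (t : ℝ) :
    (t • (1 : Matrix (Fin n) (Fin n) ℝ) - A).adjugate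
      = ∑ m ∈ Finset.range n, t ^ m • Madj A m := by
  rw [← map_charmatrix_eval A t, ← RingHom.map_adjugate]
  ext i j
  have hdeg : ((Matrix.charmatrix A).adjugate i j).natDegree < n :=
    lt_of_le_of_lt (natDegree_adjugate_charmatrix_le A i j) (by omega)
  simp only [RingHom.mapMatrix_apply, Matrix.map_apply, Polynomial.coe_evalRingHom]
  rw [Polynomial.eval_eq_sum_range' hdeg t]
  simp [Madj, Matrix.sum_apply, Matrix.smul_apply, mul_comm]

lemma polyext {N : ℕ} {a b : ℕ → ℝ}
    (h : ∀ t : ℝ, ∑ m ∈ Finset.range N, a m * t ^ m = ∑ m ∈ Finset.range N, b m * t ^ m) :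
    ∀ m, m < N → a m = b m := by
  intro m hm
  have hpq : (∑ m ∈ Finset.range N, Polynomial.C (a m) * Polynomial.X ^ m)
      = ∑ m ∈ Finset.range N, Polynomial.C (b m) * Polynomial.X ^ m := by
    apply Polynomial.funext
    intro t
    simp only [Polynomial.eval_finset_sum, Polynomial.eval_mul, Polynomial.eval_C,
      Polynomial.eval_pow, Polynomial.eval_X]
    exact h t
  have hco := congrArg (fun p => Polynomial.coeff p m) hpq
  simpa [Polynomial.finset_sum_coeff, Polynomial.coeff_C_mul, Polynomial.coeff_X_pow,
    Finset.sum_ite_eq' (Finset.range N), hm] using hco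

/-- derivative of `t ↦ det (t•1 - A)` -/
lemma hasDerivAt_det_line (A : Matrix (Fin n) (Fin n) ℝ) (t : ℝ) :
    HasDerivAt (fun s : ℝ => (s • (1 : Matrix (Fin n) (Fin n) ℝ) - A).det)
      (Matrix.trace ((t • (1 : Matrix (Fin n) (Fin n) ℝ) - A).adjugate)) t := by
  have hpath : HasDerivAt
      (fun s : ℝ => (fun i j => (s • (1 : Matrix (Fin n) (Fin n) ℝ) - A) i j : Mpi n))
      (fun i j => (1 : Matrix (Fin n) (Fin n) ℝ) i j) t := by
    rw [hasDerivAt_pi]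
    intro i
    rw [hasDerivAt_pi]
    intro j
    simp only [Matrix.sub_apply, Matrix.smul_apply, smul_eq_mul]
    simpa using ((hasDerivAt_id t).mul_const ((1 : Matrix (Fin n) (Fin n) ℝ) i j)).sub_const (A i j)
  have hcomp := (hasFDerivAt_det (n := n)
    (fun i j => (t • (1 : Matrix (Fin n) (Fin n) ℝ) - A) i j)).comp_hasDerivAt t hpath
  have heq : ((fun N : Mpi n => (Matrix.of N).det) ∘
      (fun s : ℝ => (fun i j => (s • (1 : Matrix (Fin n) (Fin n) ℝ) - A) i j : Mpi n)))
      = fun s : ℝ => (s • (1 : Matrix (Fin n) (Fin n) ℝ) - A).det := by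
    funext s; show (Matrix.of _).det = _; congr 1
  rw [heq] at hcomp
  refine HasDerivAt.congr_deriv hcomp ?_
  rw [linearDeriv_det_apply]
  have h2 : Matrix.of (fun i j => (1 : Matrix (Fin n) (Fin n) ℝ) i j)
      = (1 : Matrix (Fin n) (Fin n) ℝ) := rfl
  have h3 : Matrix.of (fun i j => (t • (1 : Matrix (Fin n) (Fin n) ℝ) - A) i j)
      = t • (1 : Matrix (Fin n) (Fin n) ℝ) - A := rfl
  rw [h2, h3, Matrix.mul_one]

lemma trace_Madj (A : Matrix (Fin n) (Fin n) ℝ) (hn : 1 ≤ n) (m : ℕ) (hm : m < n) :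
    Matrix.trace (Madj A m) = ((m : ℝ) + 1) * (Matrix.charpoly A).coeff (m + 1) := by
  have key : ∀ t : ℝ, ∑ m ∈ Finset.range n, Matrix.trace (Madj A m) * t ^ m
      = ∑ m ∈ Finset.range n, (((m : ℝ) + 1) * (Matrix.charpoly A).coeff (m + 1)) * t ^ m := by
    intro t
    have hpoly : HasDerivAt
        (fun s : ℝ => ∑ m ∈ Finset.range (n + 1), (Matrix.charpoly A).coeff m * s ^ m)
        (∑ m ∈ Finset.range (n + 1), (Matrix.charpoly A).coeff m * ((m : ℝ) * t ^ (m - 1))) t :=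
      HasDerivAt.fun_sum fun m _ => (hasDerivAt_pow m t).const_mul _
    have h2 : HasDerivAt (fun s : ℝ => (s • (1 : Matrix (Fin n) (Fin n) ℝ) - A).det)
        (∑ m ∈ Finset.range (n + 1), (Matrix.charpoly A).coeff m * ((m : ℝ) * t ^ (m - 1))) t :=
      hpoly.congr_of_eventuallyEq (Filter.Eventually.of_forall fun s => det_smul_one_sub A s)
    have huniq := (hasDerivAt_det_line A t).unique h2
    have htr : Matrix.trace ((t • (1 : Matrix (Fin n) (Fin n) ℝ) - A).adjugate)
        = ∑ m ∈ Finset.range n, Matrix.trace (Madj A m) * t ^ m := by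
      rw [adjugate_smul_one_sub A hn t]
      rw [Matrix.trace_sum]
      refine Finset.sum_congr rfl fun m _ => ?_
      rw [Matrix.trace_smul, smul_eq_mul, mul_comm]
    rw [← htr, huniq, Finset.sum_range_succ']
    simp only [Nat.cast_zero, zero_mul, mul_zero, add_zero, pow_zero, Nat.add_sub_cancel,
      Nat.cast_add, Nat.cast_one]
    refine Finset.sum_congr rfl fun m _ => by ring
  exact polyext key m hm

lemma trace_newton (A : Matrix (Fin n) (Fin n) ℝ) (hn : 1 ≤ n) (k : ℕ) (hk : k ≤ n) :
    Matrix.trace (newtonOp n A k) = ((n : ℝ) - k) * matSigma n A k := by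
  rcases eq_or_lt_of_le hk with rfl | hlt
  · rw [newton_top A hn]
    simp
  · have hk' : k ≤ n - 1 := by omega
    rw [newton_eq_Madj A hn k hk', Matrix.trace_smul, smul_eq_mul,
      trace_Madj A hn (n - 1 - k) (by omega)]
    have h1 : n - 1 - k + 1 = n - k := by omega
    rw [h1]
    have h2 : ((n - 1 - k : ℕ) : ℝ) + 1 = (n : ℝ) - k := by
      have : ((n - 1 - k : ℕ) : ℝ) = (n : ℝ) - 1 - k := by
        push_cast [Nat.cast_sub (by omega : k ≤ n - 1), Nat.cast_sub hn]
        ring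
      rw [this]; ring
    rw [h2, matSigma]
    ring

lemma trace_newton_mul (A : Matrix (Fin n) (Fin n) ℝ) (hn : 1 ≤ n) (k : ℕ)
    (hk1 : 1 ≤ k) (hk2 : k ≤ n) :
    Matrix.trace (newtonOp n A (k - 1) * A) = (k : ℝ) * matSigma n A k := by
  obtain ⟨l, rfl⟩ : ∃ l, k = l + 1 := ⟨k - 1, by omega⟩
  have hstep : newtonOp n A l * A
      = matSigma n A (l + 1) • (1 : Matrix (Fin n) (Fin n) ℝ) - newtonOp n A (l + 1) := by
    have : newtonOp n A (l + 1)
        = matSigma n A (l + 1) • (1 : Matrix (Fin n) (Fin n) ℝ) - newtonOp n A l * A := rfl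
    rw [this]; abel
  simp only [Nat.add_sub_cancel]
  rw [hstep, Matrix.trace_sub, Matrix.trace_smul, trace_newton A hn (l + 1) hk2,
    Matrix.trace_one, smul_eq_mul]
  have : (Fintype.card (Fin n) : ℝ) = (n : ℝ) := by simp
  rw [this]
  push_cast
  ring


def clmEntry (p i : Fin n) : Mpi n →L[ℝ] ℝ :=
  (ContinuousLinearMap.proj i).comp (ContinuousLinearMap.proj (R := ℝ)
    (φ := fun _ : Fin n => (Fin n → ℝ)) p)

@[simp] lemma clmEntry_apply (p i : Fin n) (M : Mpi n) : clmEntry p i M = M p i := rfl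

lemma matSigma_zero (A : Matrix (Fin n) (Fin n) ℝ) : matSigma n A 0 = 1 := by
  simp [matSigma, charpoly_coeff_card]

lemma trace_mul_entry (T A : Matrix (Fin n) (Fin n) ℝ) :
    Matrix.trace (T * A) = ∑ i, ∑ p, T i p * A p i := by
  simp [Matrix.trace, Matrix.diag, Matrix.mul_apply]

lemma newton_succ_entry (A : Matrix (Fin n) (Fin n) ℝ) (k : ℕ) (i j : Fin n) :
    newtonOp n A (k + 1) i j
      = matSigma n A (k + 1) * (1 : Matrix (Fin n) (Fin n) ℝ) i j
        - ∑ p, newtonOp n A k i p * A p j := by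
  show (matSigma n A (k+1) • (1 : Matrix (Fin n) (Fin n) ℝ) - newtonOp n A k * A) i j = _
  simp [Matrix.sub_apply, Matrix.smul_apply, Matrix.mul_apply, smul_eq_mul]

lemma differentiable_pair (hn : 1 ≤ n) :
    ∀ k, k ≤ n → Differentiable ℝ (fun M : Mpi n => matSigma n (Matrix.of M) k)
      ∧ ∀ i j, Differentiable ℝ (fun M : Mpi n => newtonOp n (Matrix.of M) k i j) := by
  intro k
  induction k with
  | zero =>
    intro _
    constructor
    · simp only [matSigma_zero]; exact differentiable_const 1
    · intro i j
      have : (fun M : Mpi n => newtonOp n (Matrix.of M) 0 i j)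
          = fun _ => (1 : Matrix (Fin n) (Fin n) ℝ) i j := rfl
      rw [this]; exact differentiable_const _
  | succ k ih =>
    intro hk
    obtain ⟨ihσ, ihT⟩ := ih (by omega)
    have hσ : Differentiable ℝ (fun M : Mpi n => matSigma n (Matrix.of M) (k + 1)) := by
      have heq : (fun M : Mpi n => matSigma n (Matrix.of M) (k + 1))
          = fun M : Mpi n => ((k : ℝ) + 1)⁻¹
              * ∑ i, ∑ p, newtonOp n (Matrix.of M) k i p * M p i := by
        funext M
        have h1 := trace_newton_mul (Matrix.of M) hn (k + 1) (by omega) hk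
        simp only [Nat.add_sub_cancel] at h1
        rw [trace_mul_entry] at h1
        have h2 : ((k : ℝ) + 1) ≠ 0 := by positivity
        push_cast at h1
        rw [show (∑ i, ∑ p, newtonOp n (Matrix.of M) k i p * M p i)
            = ∑ i, ∑ p, newtonOp n (Matrix.of M) k i p * Matrix.of M p i from rfl, h1]
        field_simp
      rw [heq]
      refine Differentiable.const_mul ?_ _
      refine Differentiable.fun_sum fun i _ => Differentiable.fun_sum fun p _ => ?_
      exact (ihT i p).mul (clmEntry p i).differentiable
    refine ⟨hσ, fun i j => ?_⟩
    have heq : (fun M : Mpi n => newtonOp n (Matrix.of M) (k + 1) i j)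
        = fun M : Mpi n => matSigma n (Matrix.of M) (k + 1) * (1 : Matrix (Fin n) (Fin n) ℝ) i j
            - ∑ p, newtonOp n (Matrix.of M) k i p * M p j := by
      funext M; exact newton_succ_entry (Matrix.of M) k i j
    rw [heq]
    refine Differentiable.sub (hσ.mul_const _) ?_
    exact Differentiable.fun_sum fun p _ => (ihT i p).mul (clmEntry p j).differentiable

def coefffn (n m : ℕ) : Mpi n → ℝ := fun M => (Matrix.charpoly (Matrix.of M)).coeff m

lemma coefffn_eq {m : ℕ} (hm : m ≤ n) :
    coefffn n m = fun M : Mpi n => (-1 : ℝ) ^ (n - m) * matSigma n (Matrix.of M) (n - m) := by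
  funext M
  rw [coefffn, matSigma]
  have h1 : n - (n - m) = m := by omega
  rw [h1, ← mul_assoc, ← pow_add]
  simp [Even.neg_one_pow ⟨n - m, rfl⟩]

lemma differentiable_coefffn (hn : 1 ≤ n) {m : ℕ} (hm : m ≤ n) :
    Differentiable ℝ (coefffn n m) := by
  rw [coefffn_eq hm]
  exact ((differentiable_pair hn (n - m) (by omega)).1).const_mul _

lemma fderiv_coefffn (hn : 1 ≤ n) {m : ℕ} (hm : m ≤ n) (A B : Mpi n) :
    fderiv ℝ (coefffn n m) A B = -(Matrix.trace (Madj (Matrix.of A) m * Matrix.of B)) := by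
  -- the path s ↦ A + s B
  have hpath : HasDerivAt (fun s : ℝ => (fun p q => A p q + s * B p q : Mpi n)) B 0 := by
    rw [hasDerivAt_pi]; intro p; rw [hasDerivAt_pi]; intro q
    simpa [Pi.add_def] using (hasDerivAt_const (0:ℝ) (A p q)).add ((hasDerivAt_id (0:ℝ)).mul_const (B p q))
  have hpath0 : (fun p q => A p q + (0:ℝ) * B p q : Mpi n) = A := by funext p q; simp
  -- derivative of each coefficient along the path
  have hc : ∀ m' : ℕ, m' ≤ n → HasDerivAt (fun s : ℝ => coefffn n m' (fun p q => A p q + s * B p q))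
      (fderiv ℝ (coefffn n m') A B) 0 := by
    intro m' hm'
    have hd : HasFDerivAt (coefffn n m') (fderiv ℝ (coefffn n m') A)
        ((fun p q => A p q + (0:ℝ) * B p q : Mpi n)) := by
      rw [hpath0]; exact ((differentiable_coefffn hn hm') A).hasFDerivAt
    have := hd.comp_hasDerivAt 0 hpath
    simpa [Function.comp_def] using this
  -- the key polynomial identity in t
  have key : ∀ t : ℝ, ∑ m' ∈ Finset.range (n + 1),
        (-(Matrix.trace (Madj (Matrix.of A) m' * Matrix.of B))) * t ^ m'
      = ∑ m' ∈ Finset.range (n + 1), (fderiv ℝ (coefffn n m') A B) * t ^ m' := by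
    intro t
    -- left side: derivative of s ↦ det (t•1 - of (A + sB)) at 0
    set P0 : Mpi n := fun i j => t * (1 : Matrix (Fin n) (Fin n) ℝ) i j - A i j with hP0
    have hofP0 : Matrix.of P0 = t • (1 : Matrix (Fin n) (Fin n) ℝ) - Matrix.of A := by
      ext i j; simp [hP0, Matrix.smul_apply, Matrix.sub_apply]
    have hmatpath : HasDerivAt (fun s : ℝ => (fun i j =>
          t * (1 : Matrix (Fin n) (Fin n) ℝ) i j - (A i j + s * B i j) : Mpi n))
        (fun i j => -(B i j)) 0 := by
      rw [hasDerivAt_pi]; intro i; rw [hasDerivAt_pi]; intro j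
      simpa [Pi.sub_def, Pi.add_def] using ((hasDerivAt_const (0:ℝ) (t * (1 : Matrix (Fin n) (Fin n) ℝ) i j)).sub
        ((hasDerivAt_const (0:ℝ) (A i j)).add ((hasDerivAt_id (0:ℝ)).mul_const (B i j))))
    have hmatpath0 : (fun i j => t * (1 : Matrix (Fin n) (Fin n) ℝ) i j
        - (A i j + (0:ℝ) * B i j) : Mpi n) = P0 := by
      funext i j; simp [hP0]
    have hG : HasDerivAt (fun s : ℝ =>
          (Matrix.of (fun i j => t * (1 : Matrix (Fin n) (Fin n) ℝ) i j - (A i j + s * B i j))).det)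
        ((detCML n).linearDeriv P0 (fun i j => -(B i j))) 0 := by
      have hdet : HasFDerivAt (fun N : Mpi n => (Matrix.of N).det) ((detCML n).linearDeriv P0)
          ((fun i j => t * (1 : Matrix (Fin n) (Fin n) ℝ) i j - (A i j + (0:ℝ) * B i j) : Mpi n)) := by
        rw [hmatpath0]; exact hasFDerivAt_det P0
      have := hdet.comp_hasDerivAt 0 hmatpath
      simpa [Function.comp_def] using this
    have hGval : (detCML n).linearDeriv P0 (fun i j => -(B i j))
        = ∑ m' ∈ Finset.range (n + 1),
            (-(Matrix.trace (Madj (Matrix.of A) m' * Matrix.of B))) * t ^ m' := by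
      rw [linearDeriv_det_apply, hofP0]
      have hofB : Matrix.of (fun i j => -(B i j)) = -(Matrix.of B) := rfl
      rw [hofB, adjugate_smul_one_sub (Matrix.of A) hn t]
      have hL : Matrix.trace ((∑ m' ∈ Finset.range n, t ^ m' • Madj (Matrix.of A) m')
            * (-(Matrix.of B)))
          = -∑ m' ∈ Finset.range n, t ^ m' * Matrix.trace (Madj (Matrix.of A) m' * Matrix.of B) := by
        rw [Matrix.mul_neg, Matrix.trace_neg]
        congr 1
        rw [Matrix.sum_mul, Matrix.trace_sum]
        exact Finset.sum_congr rfl fun m' _ => by rw [Matrix.smul_mul, Matrix.trace_smul, smul_eq_mul]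
      rw [hL, Finset.sum_range_succ, Madj_zero_of_le (Matrix.of A) n le_rfl]
      simp only [Matrix.zero_mul, Matrix.trace_zero, neg_zero, zero_mul, add_zero, neg_mul]
      rw [← Finset.sum_neg_distrib]
      exact Finset.sum_congr rfl fun m' _ => by ring
    -- right side: derivative of the coefficient expansion
    have hG2 : HasDerivAt (fun s : ℝ =>
          (Matrix.of (fun i j => t * (1 : Matrix (Fin n) (Fin n) ℝ) i j - (A i j + s * B i j))).det)
        (∑ m' ∈ Finset.range (n + 1), (fderiv ℝ (coefffn n m') A B) * t ^ m') 0 := by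
      have hsum : HasDerivAt (fun s : ℝ => ∑ m' ∈ Finset.range (n + 1),
            coefffn n m' (fun p q => A p q + s * B p q) * t ^ m')
          (∑ m' ∈ Finset.range (n + 1), (fderiv ℝ (coefffn n m') A B) * t ^ m') 0 :=
        HasDerivAt.fun_sum fun m' hm' => (hc m' (by simp at hm'; omega)).mul_const _
      refine hsum.congr_of_eventuallyEq (Filter.Eventually.of_forall fun s => ?_)
      show (Matrix.of (fun i j => t * (1 : Matrix (Fin n) (Fin n) ℝ) i j - (A i j + s * B i j))).det
        = ∑ m' ∈ Finset.range (n + 1), coefffn n m' (fun p q => A p q + s * B p q) * t ^ m'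
      have hof : Matrix.of (fun i j => t * (1 : Matrix (Fin n) (Fin n) ℝ) i j - (A i j + s * B i j))
          = t • (1 : Matrix (Fin n) (Fin n) ℝ) - Matrix.of (fun p q => A p q + s * B p q) := by
        ext i j; simp [Matrix.smul_apply, Matrix.sub_apply]
      rw [hof, det_smul_one_sub]
      rfl
    rw [← hGval]
    exact hG.unique hG2
  exact (polyext key m (by omega)).symm


def traceCLM (T : Matrix (Fin n) (Fin n) ℝ) : Mpi n →L[ℝ] ℝ :=
  ∑ i, ∑ p, T i p • clmEntry p i

lemma traceCLM_apply (T : Matrix (Fin n) (Fin n) ℝ) (B : Mpi n) :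
    traceCLM T B = Matrix.trace (T * Matrix.of B) := by
  rw [trace_mul_entry]
  simp [traceCLM, ContinuousLinearMap.sum_apply, ContinuousLinearMap.smul_apply]

lemma fderiv_sigma_eq (hn : 1 ≤ n) {k : ℕ} (hk1 : 1 ≤ k) (hk2 : k ≤ n) (A B : Mpi n) :
    fderiv ℝ (fun M : Mpi n => matSigma n (Matrix.of M) k) A B
      = Matrix.trace (newtonOp n (Matrix.of A) (k - 1) * Matrix.of B) := by
  have hσeq : (fun M : Mpi n => matSigma n (Matrix.of M) k)
      = fun M => (-1:ℝ)^k * coefffn n (n - k) M := rfl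
  have h1 : fderiv ℝ (fun M : Mpi n => (-1:ℝ)^k * coefffn n (n-k) M) A B
      = (-1:ℝ)^k * fderiv ℝ (coefffn n (n-k)) A B := by
    rw [fderiv_const_mul ((differentiable_coefffn hn (by omega : n - k ≤ n)) A) ((-1:ℝ)^k)]
    rfl
  rw [hσeq, h1, fderiv_coefffn hn (by omega : n - k ≤ n) A B]
  obtain ⟨l, rfl⟩ : ∃ l, k = l + 1 := ⟨k - 1, by omega⟩
  have h2 := newton_eq_Madj (Matrix.of A) hn l (by omega)
  have h3 : n - 1 - l = n - (l+1) := by omega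
  rw [h3] at h2
  simp only [Nat.add_sub_cancel]
  rw [h2, Matrix.smul_mul, Matrix.trace_smul, smul_eq_mul]
  ring

lemma hasFDerivAt_sigma (hn : 1 ≤ n) {k : ℕ} (hk1 : 1 ≤ k) (hk2 : k ≤ n) (A : Mpi n) :
    HasFDerivAt (fun M : Mpi n => matSigma n (Matrix.of M) k)
      (traceCLM (newtonOp n (Matrix.of A) (k - 1))) A := by
  have hd := ((differentiable_pair hn k hk2).1 A).hasFDerivAt
  have heq : traceCLM (newtonOp n (Matrix.of A) (k-1))
      = fderiv ℝ (fun M : Mpi n => matSigma n (Matrix.of M) k) A :=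
    ContinuousLinearMap.ext fun B => by
      rw [traceCLM_apply]; exact (fderiv_sigma_eq hn hk1 hk2 A B).symm
  rw [heq]
  exact hd

end NewtonAux

namespace EucAux
open NewtonAux

variable {n : ℕ}

def ee (i : Fin n) : EuclideanSpace ℝ (Fin n) := EuclideanSpace.single i 1

variable {u : EuclideanSpace ℝ (Fin n) → ℝ} {Ω : Set (EuclideanSpace ℝ (Fin n))}
  {x : EuclideanSpace ℝ (Fin n)}

def F2 (u : EuclideanSpace ℝ (Fin n) → ℝ) := fderiv ℝ (fderiv ℝ u)
def F3 (u : EuclideanSpace ℝ (Fin n) → ℝ) := fderiv ℝ (F2 u)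
def Apil (u : EuclideanSpace ℝ (Fin n) → ℝ) (y : EuclideanSpace ℝ (Fin n)) : Mpi n :=
  fun i j => F2 u y (ee i) (ee j)

lemma diffAt_of_cd {X : Type*} [NormedAddCommGroup X] [NormedSpace ℝ X]
    {f : EuclideanSpace ℝ (Fin n) → X} (hΩ : IsOpen Ω) (hf : ContDiffOn ℝ (⊤ : ℕ∞) f Ω)
    (hx : x ∈ Ω) : DifferentiableAt ℝ f x :=
  (hf.contDiffAt (hΩ.mem_nhds hx)).differentiableAt (by simp)

lemma hF1cd (hΩ : IsOpen Ω) (hu : ContDiffOn ℝ (⊤ : ℕ∞) u Ω) : ContDiffOn ℝ (⊤ : ℕ∞) (fderiv ℝ u) Ω :=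
  hu.fderiv_of_isOpen hΩ (by simp)

lemma hF2cd (hΩ : IsOpen Ω) (hu : ContDiffOn ℝ (⊤ : ℕ∞) u Ω) : ContDiffOn ℝ (⊤ : ℕ∞) (F2 u) Ω :=
  (hF1cd hΩ hu).fderiv_of_isOpen hΩ (by simp)

lemma hF2at (hΩ : IsOpen Ω) (hu : ContDiffOn ℝ (⊤ : ℕ∞) u Ω) (hx : x ∈ Ω) :
    HasFDerivAt (fderiv ℝ u) (F2 u x) x :=
  (diffAt_of_cd hΩ (hF1cd hΩ hu) hx).hasFDerivAt

lemma hF3at (hΩ : IsOpen Ω) (hu : ContDiffOn ℝ (⊤ : ℕ∞) u Ω) (hx : x ∈ Ω) :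
    HasFDerivAt (F2 u) (F3 u x) x :=
  (diffAt_of_cd hΩ (hF2cd hΩ hu) hx).hasFDerivAt

lemma hEv1 (hΩ : IsOpen Ω) (hu : ContDiffOn ℝ (⊤ : ℕ∞) u Ω) (hx : x ∈ Ω) :
    ∀ᶠ y in nhds x, HasFDerivAt u (fderiv ℝ u y) y :=
  Filter.eventually_of_mem (hΩ.mem_nhds hx) fun y hy => (diffAt_of_cd hΩ hu hy).hasFDerivAt

lemma hEv2 (hΩ : IsOpen Ω) (hu : ContDiffOn ℝ (⊤ : ℕ∞) u Ω) (hx : x ∈ Ω) :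
    ∀ᶠ y in nhds x, HasFDerivAt (fderiv ℝ u) (F2 u y) y :=
  Filter.eventually_of_mem (hΩ.mem_nhds hx) fun y hy =>
    (diffAt_of_cd hΩ (hF1cd hΩ hu) hy).hasFDerivAt

lemma symm2 (hΩ : IsOpen Ω) (hu : ContDiffOn ℝ (⊤ : ℕ∞) u Ω) (hx : x ∈ Ω)
    (v w : EuclideanSpace ℝ (Fin n)) : F2 u x v w = F2 u x w v :=
  second_derivative_symmetric_of_eventually (hEv1 hΩ hu hx) (hF2at hΩ hu hx) v w

lemma symm3a (hΩ : IsOpen Ω) (hu : ContDiffOn ℝ (⊤ : ℕ∞) u Ω) (hx : x ∈ Ω)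
    (z v : EuclideanSpace ℝ (Fin n)) : F3 u x z v = F3 u x v z :=
  second_derivative_symmetric_of_eventually (hEv2 hΩ hu hx) (hF3at hΩ hu hx) z v

lemma hF2applyFD (hΩ : IsOpen Ω) (hu : ContDiffOn ℝ (⊤ : ℕ∞) u Ω) (hx : x ∈ Ω)
    (v w : EuclideanSpace ℝ (Fin n)) :
    HasFDerivAt (fun y => F2 u y v w) (((F3 u x).flip v).flip w) x := by
  have h1 : HasFDerivAt (fun y => F2 u y v) ((F3 u x).flip v) x := by
    have h := (hF3at hΩ hu hx).clm_apply (hasFDerivAt_const v x)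
    simpa using h
  have h2 := h1.clm_apply (hasFDerivAt_const w x)
  simpa using h2

lemma symm3b (hΩ : IsOpen Ω) (hu : ContDiffOn ℝ (⊤ : ℕ∞) u Ω) (hx : x ∈ Ω)
    (z v w : EuclideanSpace ℝ (Fin n)) : F3 u x z v w = F3 u x z w v := by
  have hev : (fun y => F2 u y v w) =ᶠ[nhds x] (fun y => F2 u y w v) :=
    Filter.eventually_of_mem (hΩ.mem_nhds hx) fun y hy => symm2 hΩ hu hy v w
  have h1 := (hF2applyFD hΩ hu hx v w).fderiv
  have h2 := (hF2applyFD hΩ hu hx w v).fderiv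
  have h3 : (((F3 u x).flip v).flip w) = (((F3 u x).flip w).flip v) := by
    rw [← h1, ← h2]
    exact hev.fderiv_eq
  have := congrFun (congrArg (fun L => (L : _ →L[ℝ] ℝ).toFun) h3) z
  simpa using this

lemma symm13 (hΩ : IsOpen Ω) (hu : ContDiffOn ℝ (⊤ : ℕ∞) u Ω) (hx : x ∈ Ω)
    (a b c : EuclideanSpace ℝ (Fin n)) : F3 u x a b c = F3 u x c b a := by
  calc F3 u x a b c = F3 u x b a c := by rw [symm3a hΩ hu hx a b]
    _ = F3 u x b c a := symm3b hΩ hu hx b a c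
    _ = F3 u x c b a := by rw [symm3a hΩ hu hx b c]

lemma hess_eq (u : EuclideanSpace ℝ (Fin n) → ℝ) (y : EuclideanSpace ℝ (Fin n)) :
    hessianMatrix n u y = Matrix.of (Apil u y) := by
  ext i j
  show iteratedFDeriv ℝ 2 u y ![EuclideanSpace.single i 1, EuclideanSpace.single j 1] = _
  rw [iteratedFDeriv_two_apply]
  rfl

lemma grad_apply (u : EuclideanSpace ℝ (Fin n) → ℝ) (y : EuclideanSpace ℝ (Fin n)) (i : Fin n) :
    gradient u y i = fderiv ℝ u y (ee i) := by
  have h1 : gradient u y i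
      = inner (𝕜 := ℝ) (gradient u y) (EuclideanSpace.single i (1:ℝ)) := by
    rw [EuclideanSpace.inner_single_right]
    simp
  rw [h1]
  exact InnerProductSpace.toDual_symm_apply

lemma hgFD (hΩ : IsOpen Ω) (hu : ContDiffOn ℝ (⊤ : ℕ∞) u Ω) (hx : x ∈ Ω) (j : Fin n) :
    HasFDerivAt (fun y => gradient u y j) ((F2 u x).flip (ee j)) x := by
  have heq : (fun y => gradient u y j) = fun y => fderiv ℝ u y (ee j) := by
    funext y; exact grad_apply u y j
  rw [heq]
  have h := (hF2at hΩ hu hx).clm_apply (hasFDerivAt_const (ee j) x)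
  simpa using h

def Apil' (u : EuclideanSpace ℝ (Fin n) → ℝ) (x : EuclideanSpace ℝ (Fin n)) :
    EuclideanSpace ℝ (Fin n) →L[ℝ] Mpi n :=
  ContinuousLinearMap.pi fun i => ContinuousLinearMap.pi fun j =>
    ((F3 u x).flip (ee i)).flip (ee j)

@[simp] lemma Apil'_apply (z : EuclideanSpace ℝ (Fin n)) (i j : Fin n) :
    Apil' u x z i j = F3 u x z (ee i) (ee j) := rfl

lemma hApilFD (hΩ : IsOpen Ω) (hu : ContDiffOn ℝ (⊤ : ℕ∞) u Ω) (hx : x ∈ Ω) :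
    HasFDerivAt (Apil u) (Apil' u x) x := by
  rw [hasFDerivAt_pi']
  intro i
  rw [show (ContinuousLinearMap.proj i).comp (Apil' u x)
      = ContinuousLinearMap.pi fun j => ((F3 u x).flip (ee i)).flip (ee j) from
    ContinuousLinearMap.proj_pi _ _]
  rw [hasFDerivAt_pi']
  intro j
  rw [ContinuousLinearMap.proj_pi]
  exact hF2applyFD hΩ hu hx (ee i) (ee j)

lemma hσFD (hn : 1 ≤ n) (hΩ : IsOpen Ω) (hu : ContDiffOn ℝ (⊤ : ℕ∞) u Ω) (hx : x ∈ Ω)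
    {k : ℕ} (hk1 : 1 ≤ k) (hk2 : k ≤ n) :
    HasFDerivAt (fun y => matSigma n (hessianMatrix n u y) k)
      ((traceCLM (newtonOp n (hessianMatrix n u x) (k-1))).comp (Apil' u x)) x := by
  have h0 := (hasFDerivAt_sigma hn hk1 hk2 (Apil u x)).comp x (hApilFD hΩ hu hx)
  have heq : ((fun M : Mpi n => matSigma n (Matrix.of M) k) ∘ (Apil u))
      = fun y => matSigma n (hessianMatrix n u y) k := by
    funext y
    simp only [Function.comp_apply, hess_eq]
  rw [heq] at h0
  rw [hess_eq]
  exact h0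

lemma fderiv_sigma_hess (hn : 1 ≤ n) (hΩ : IsOpen Ω) (hu : ContDiffOn ℝ (⊤ : ℕ∞) u Ω) (hx : x ∈ Ω)
    {k : ℕ} (hk1 : 1 ≤ k) (hk2 : k ≤ n) (z : EuclideanSpace ℝ (Fin n)) :
    fderiv ℝ (fun y => matSigma n (hessianMatrix n u y) k) x z
      = ∑ a, ∑ b, newtonOp n (hessianMatrix n u x) (k-1) a b * F3 u x z (ee b) (ee a) := by
  rw [(hσFD hn hΩ hu hx hk1 hk2).fderiv]
  rw [ContinuousLinearMap.comp_apply, traceCLM_apply, trace_mul_entry]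
  refine Finset.sum_congr rfl fun a _ => Finset.sum_congr rfl fun b _ => ?_
  congr 1

lemma hTdiffAt (hn : 1 ≤ n) (hΩ : IsOpen Ω) (hu : ContDiffOn ℝ (⊤ : ℕ∞) u Ω) (hx : x ∈ Ω)
    {k : ℕ} (hk2 : k ≤ n) (i j : Fin n) :
    DifferentiableAt ℝ (fun y => newtonOp n (hessianMatrix n u y) k i j) x := by
  have h1 := ((differentiable_pair hn k hk2).2 i j (Apil u x)).comp x
    (hApilFD hΩ hu hx).differentiableAt
  have heq : ((fun M : Mpi n => newtonOp n (Matrix.of M) k i j) ∘ (Apil u))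
      = fun y => newtonOp n (hessianMatrix n u y) k i j := by
    funext y
    simp only [Function.comp_apply, hess_eq]
  rwa [heq] at h1

lemma hAentryFD (hΩ : IsOpen Ω) (hu : ContDiffOn ℝ (⊤ : ℕ∞) u Ω) (hx : x ∈ Ω) (p j : Fin n) :
    HasFDerivAt (fun y => Apil u y p j) (((F3 u x).flip (ee p)).flip (ee j)) x :=
  hF2applyFD hΩ hu hx (ee p) (ee j)

lemma div_free (hn : 1 ≤ n) (hΩ : IsOpen Ω) (hu : ContDiffOn ℝ (⊤ : ℕ∞) u Ω) (hx : x ∈ Ω) :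
    ∀ k, k ≤ n - 1 → ∀ j,
      ∑ i, fderiv ℝ (fun y => newtonOp n (hessianMatrix n u y) k i j) x (ee i) = 0 := by
  intro k
  induction k with
  | zero =>
    intro _ j
    have : ∀ i : Fin n, (fun y => newtonOp n (hessianMatrix n u y) 0 i j)
        = fun _ => (1 : Matrix (Fin n) (Fin n) ℝ) i j := fun i => rfl
    refine Finset.sum_eq_zero fun i _ => ?_
    rw [this i, fderiv_fun_const]
    rfl
  | succ k ih =>
    intro hk j
    have hk' : k ≤ n - 1 := by omega
    have hkn : k ≤ n := by omega
    have hσd : DifferentiableAt ℝ (fun y => matSigma n (hessianMatrix n u y) (k+1)) x :=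
      (hσFD hn hΩ hu hx (by omega) (by omega)).differentiableAt
    -- rewrite each entry function
    have hfun : ∀ i : Fin n, (fun y => newtonOp n (hessianMatrix n u y) (k+1) i j)
        = fun y => matSigma n (hessianMatrix n u y) (k+1) * (1 : Matrix (Fin n) (Fin n) ℝ) i j
            - ∑ p, newtonOp n (hessianMatrix n u y) k i p * Apil u y p j := by
      intro i
      funext y
      rw [newton_succ_entry]
      congr 1
      refine Finset.sum_congr rfl fun p _ => ?_
      rw [hess_eq]
      rfl
    have hsumd : ∀ i, DifferentiableAt ℝ
        (fun y => ∑ p, newtonOp n (hessianMatrix n u y) k i p * Apil u y p j) x := by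
      intro i
      refine DifferentiableAt.fun_sum fun p _ => ?_
      exact (hTdiffAt hn hΩ hu hx hkn i p).mul (hAentryFD hΩ hu hx p j).differentiableAt
    have hderiv : ∀ i : Fin n,
        fderiv ℝ (fun y => newtonOp n (hessianMatrix n u y) (k+1) i j) x (ee i)
        = fderiv ℝ (fun y => matSigma n (hessianMatrix n u y) (k+1)) x (ee i)
            * (1 : Matrix (Fin n) (Fin n) ℝ) i j
          - ∑ p, (newtonOp n (hessianMatrix n u x) k i p * F3 u x (ee i) (ee p) (ee j)
              + Apil u x p j
                * fderiv ℝ (fun y => newtonOp n (hessianMatrix n u y) k i p) x (ee i)) := by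
      intro i
      rw [hfun i]
      rw [fderiv_fun_sub (hσd.mul_const _) (hsumd i)]
      rw [fderiv_mul_const hσd]
      rw [fderiv_fun_sum (A := fun p y => newtonOp n (hessianMatrix n u y) k i p * Apil u y p j) (fun p _ =>
        (hTdiffAt hn hΩ hu hx hkn i p).mul (hAentryFD hΩ hu hx p j).differentiableAt)]
      have hsum_eq : ∀ p : Fin n,
          fderiv ℝ (fun y => newtonOp n (hessianMatrix n u y) k i p * Apil u y p j) x (ee i)
          = newtonOp n (hessianMatrix n u x) k i p * F3 u x (ee i) (ee p) (ee j)
            + Apil u x p j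
              * fderiv ℝ (fun y => newtonOp n (hessianMatrix n u y) k i p) x (ee i) := by
        intro p
        rw [fderiv_fun_mul (hTdiffAt hn hΩ hu hx hkn i p) (hAentryFD hΩ hu hx p j).differentiableAt]
        rw [(hAentryFD hΩ hu hx p j).fderiv]
        simp only [ContinuousLinearMap.add_apply, ContinuousLinearMap.smul_apply, smul_eq_mul,
          ContinuousLinearMap.flip_apply]
      simp only [ContinuousLinearMap.sub_apply, ContinuousLinearMap.smul_apply,
        ContinuousLinearMap.sum_apply, smul_eq_mul]
      rw [Finset.sum_congr rfl fun p _ => hsum_eq p]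
      ring
    simp_rw [hderiv]
    rw [Finset.sum_sub_distrib]
    -- first part: ∑ i, (fderiv σ)(e i) * δ_{ij} = (fderiv σ)(e j)
    have h1 : ∑ i, fderiv ℝ (fun y => matSigma n (hessianMatrix n u y) (k+1)) x (ee i)
        * (1 : Matrix (Fin n) (Fin n) ℝ) i j
        = ∑ a, ∑ b, newtonOp n (hessianMatrix n u x) k a b * F3 u x (ee j) (ee b) (ee a) := by
      have : ∀ i : Fin n, (1 : Matrix (Fin n) (Fin n) ℝ) i j = if i = j then 1 else 0 :=
        fun i => Matrix.one_apply
      simp_rw [this, mul_ite, mul_one, mul_zero]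
      rw [Finset.sum_ite_eq' Finset.univ j]
      simp only [Finset.mem_univ, if_true]
      have := fderiv_sigma_hess hn hΩ hu hx (k := k+1) (by omega) (by omega) (ee j)
      simp only [Nat.add_sub_cancel] at this
      exact this
    rw [h1]
    -- second part splits
    have h2 : ∑ i, ∑ p, (newtonOp n (hessianMatrix n u x) k i p * F3 u x (ee i) (ee p) (ee j)
          + Apil u x p j * fderiv ℝ (fun y => newtonOp n (hessianMatrix n u y) k i p) x (ee i))
        = (∑ i, ∑ p, newtonOp n (hessianMatrix n u x) k i p * F3 u x (ee i) (ee p) (ee j))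
          + ∑ p, Apil u x p j
              * ∑ i, fderiv ℝ (fun y => newtonOp n (hessianMatrix n u y) k i p) x (ee i) := by
      rw [← Finset.sum_add_distrib]
      simp_rw [Finset.sum_add_distrib]
      congr 1
      rw [Finset.sum_comm]
      refine Finset.sum_congr rfl fun p _ => ?_
      rw [Finset.mul_sum]
    rw [h2]
    have h3 : ∀ p : Fin n,
        ∑ i, fderiv ℝ (fun y => newtonOp n (hessianMatrix n u y) k i p) x (ee i) = 0 :=
      fun p => ih hk' p
    simp_rw [h3, mul_zero, Finset.sum_const_zero, add_zero]
    have h4 : ∑ a, ∑ b, newtonOp n (hessianMatrix n u x) k a b * F3 u x (ee j) (ee b) (ee a)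
        = ∑ i, ∑ p, newtonOp n (hessianMatrix n u x) k i p * F3 u x (ee i) (ee p) (ee j) := by
      refine Finset.sum_congr rfl fun a _ => Finset.sum_congr rfl fun b _ => ?_
      rw [symm13 hΩ hu hx (ee j) (ee b) (ee a)]
    rw [h4, sub_self]

end EucAux


open NewtonAux EucAux in
/-- Lemma 2.1 in Euclidean space: on an open set where `∇u ≠ 0`,
the vector field `V = T_{r−1}(∇²u)(∇u)/‖∇u‖^r` satisfies `div V = r σ_r(κ^u)`. -/
theorem div_newton_field_eq (n : ℕ) (hn : 1 ≤ n)
    (Ω : Set (EuclideanSpace ℝ (Fin n))) (hΩ : IsOpen Ω)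
    (u : EuclideanSpace ℝ (Fin n) → ℝ) (hu : ContDiffOn ℝ (⊤ : ℕ∞) u Ω)
    (hgrad : ∀ x ∈ Ω, gradient u x ≠ 0)
    (r : ℕ) (hr1 : 1 ≤ r) (hrn : r ≤ n - 1)
    (V : EuclideanSpace ℝ (Fin n) → Fin n → ℝ)
    (hV : ∀ y, V y = fun i =>
      ((newtonOp n (hessianMatrix n u y) (r - 1)).mulVec fun j => gradient u y j) i
        / ‖gradient u y‖ ^ r) :
    ∀ x ∈ Ω,
      (∑ i, fderiv ℝ (fun y => V y i) x (EuclideanSpace.single i 1))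
        = r * sigmaKappa n r u x := by
  obtain ⟨l, rfl⟩ : ∃ l, r = l + 1 := ⟨r - 1, by omega⟩
  intro x hx
  have hn2 : 2 ≤ n := by omega
  have hln : l + 1 ≤ n - 1 := hrn
  -- notation
  set P := ‖gradient u x‖ with hPdef
  have hP0 : 0 < P := norm_pos_iff.mpr (hgrad x hx)
  set g : Fin n → ℝ := fun j => gradient u x j with hgdef
  set Am := hessianMatrix n u x with hAmdef
  set Tm := newtonOp n Am l with hTmdef
  set σ := matSigma n Am (l + 1) with hσdef
  have hF2A : ∀ i j, F2 u x (ee i) (ee j) = Am i j := by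
    intro i j
    rw [hAmdef, hess_eq]
    rfl
  have hAsym : Amᵀ = Am := by
    ext i j
    have := symm2 hΩ hu hx (ee j) (ee i)
    rw [Matrix.transpose_apply, ← hF2A, ← hF2A, this]
  have hAmsym : ∀ i j, Am i j = Am j i := by
    intro i j
    conv_lhs => rw [← hAsym]
    rw [Matrix.transpose_apply]
  -- the squared-norm function
  set qf : EuclideanSpace ℝ (Fin n) → ℝ := fun y => ∑ j, gradient u y j * gradient u y j
    with hqfdef
  have hnorm_eq : ∀ y : EuclideanSpace ℝ (Fin n), ‖gradient u y‖ = Real.sqrt (qf y) := by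
    intro y
    rw [EuclideanSpace.norm_eq]
    congr 1
    refine Finset.sum_congr rfl fun j _ => ?_
    rw [Real.norm_eq_abs, sq_abs, sq]
  have hq2 : qf x = P ^ 2 := by
    rw [hPdef, hnorm_eq x, Real.sq_sqrt]
    exact Finset.sum_nonneg fun j _ => mul_self_nonneg _
  have hsq : Real.sqrt (qf x) = P := by rw [← hnorm_eq x]
  have hqpos : 0 < qf x := by rw [hq2]; positivity
  -- derivatives of gradient entries
  have hgd : ∀ j, HasFDerivAt (fun y => gradient u y j) ((F2 u x).flip (ee j)) x :=
    fun j => hgFD hΩ hu hx j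
  -- derivative of qf
  have hq : HasFDerivAt qf (∑ j, (g j • (F2 u x).flip (ee j) + g j • (F2 u x).flip (ee j))) x :=
    HasFDerivAt.fun_sum fun j _ => (hgd j).mul (hgd j)
  -- derivative of sqrt of qf
  have hφ : HasFDerivAt (fun y => Real.sqrt (qf y))
      ((1 / (2 * P)) • (∑ j, (g j • (F2 u x).flip (ee j) + g j • (F2 u x).flip (ee j)))) x := by
    have hs := Real.hasDerivAt_sqrt (ne_of_gt hqpos)
    have := hs.comp_hasFDerivAt x hq
    rw [hsq] at this
    exact this
  -- derivative of the denominator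
  have hden : HasFDerivAt (fun y => (Real.sqrt (qf y)) ^ (l + 1))
      ((((l : ℝ) + 1) * P ^ l) • ((1 / (2 * P)) •
        (∑ j, (g j • (F2 u x).flip (ee j) + g j • (F2 u x).flip (ee j))))) x := by
    have hp := hasDerivAt_pow (l + 1) (Real.sqrt (qf x))
    have := hp.comp_hasFDerivAt x hφ
    rw [hsq] at this
    simpa [Function.comp_def] using this
  have hdenx0 : P ^ (l + 1) ≠ 0 := by positivity
  have hinv : HasFDerivAt (fun y => ((Real.sqrt (qf y)) ^ (l + 1))⁻¹)
      ((-((P ^ (l + 1)) ^ 2)⁻¹) • ((((l : ℝ) + 1) * P ^ l) • ((1 / (2 * P)) •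
        (∑ j, (g j • (F2 u x).flip (ee j) + g j • (F2 u x).flip (ee j)))))) x := by
    have hi := hasDerivAt_inv (x := Real.sqrt (qf x) ^ (l + 1)) (by rw [hsq]; exact hdenx0)
    have := hi.comp_hasFDerivAt x hden
    rw [hsq] at this
    exact this
  -- derivatives of the numerators
  have hTd : ∀ i j, DifferentiableAt ℝ (fun y => newtonOp n (hessianMatrix n u y) l i j) x :=
    fun i j => hTdiffAt hn hΩ hu hx (by omega) i j
  have hnum : ∀ i, HasFDerivAt
      (fun y => ∑ j, newtonOp n (hessianMatrix n u y) l i j * gradient u y j)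
      (∑ j, (newtonOp n (hessianMatrix n u x) l i j • (F2 u x).flip (ee j)
        + gradient u x j • fderiv ℝ (fun y => newtonOp n (hessianMatrix n u y) l i j) x)) x :=
    fun i => HasFDerivAt.fun_sum fun j _ => ((hTd i j).hasFDerivAt).mul (hgd j)
  -- rewrite V entries
  have hVeq : ∀ i, (fun y => V y i)
      = fun y => (∑ j, newtonOp n (hessianMatrix n u y) l i j * gradient u y j)
          * ((Real.sqrt (qf y)) ^ (l + 1))⁻¹ := by
    intro i
    funext y
    rw [hV y]
    simp only [Nat.add_sub_cancel]
    rw [div_eq_mul_inv, hnorm_eq y]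
    rfl
  -- total derivative of each V entry
  have hVFD : ∀ i, HasFDerivAt (fun y => V y i)
      ((∑ j, newtonOp n (hessianMatrix n u x) l i j * gradient u x j) •
          ((-((P ^ (l + 1)) ^ 2)⁻¹) • ((((l : ℝ) + 1) * P ^ l) • ((1 / (2 * P)) •
            (∑ j, (g j • (F2 u x).flip (ee j) + g j • (F2 u x).flip (ee j))))))
        + ((Real.sqrt (qf x)) ^ (l + 1))⁻¹ •
          (∑ j, (newtonOp n (hessianMatrix n u x) l i j • (F2 u x).flip (ee j)
            + gradient u x j • fderiv ℝ (fun y => newtonOp n (hessianMatrix n u y) l i j) x))) x := by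
    intro i
    rw [hVeq i]
    exact (hnum i).mul hinv
  -- value of the derivative at basis vectors
  have hfdval : ∀ i, fderiv ℝ (fun y => V y i) x (ee i)
      = (∑ j, Tm i j * g j) *
          (-((P ^ (l + 1)) ^ 2)⁻¹ * ((((l : ℝ) + 1) * P ^ l) * ((1 / (2 * P)) *
            (∑ j, (g j * Am i j + g j * Am i j)))))
        + (P ^ (l + 1))⁻¹ *
          (∑ j, (Tm i j * Am i j
            + g j * fderiv ℝ (fun y => newtonOp n (hessianMatrix n u y) l i j) x (ee i))) := by
    intro i
    rw [(hVFD i).fderiv]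
    simp only [ContinuousLinearMap.add_apply, ContinuousLinearMap.smul_apply,
      ContinuousLinearMap.sum_apply, ContinuousLinearMap.flip_apply, smul_eq_mul, hsq]
    rw [hTmdef, hAmdef]
    simp only [hF2A]
    rfl
  -- the divergence-free sum
  have hdf : ∀ j, ∑ i, fderiv ℝ (fun y => newtonOp n (hessianMatrix n u y) l i j) x (ee i) = 0 :=
    fun j => div_free hn hΩ hu hx l (by omega) j
  -- trace identity
  have hStr : ∑ i, ∑ j, Tm i j * Am i j = ((l : ℝ) + 1) * σ := by
    have h1 := trace_newton_mul Am hn (l + 1) (by omega) (by omega)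
    simp only [Nat.add_sub_cancel] at h1
    rw [trace_mul_entry] at h1
    push_cast at h1
    rw [← h1, ← hTmdef]
    refine Finset.sum_congr rfl fun i _ => Finset.sum_congr rfl fun j _ => ?_
    rw [hAmsym i j]
  -- symmetric rearrangement S1 = S2 via matrix algebra
  have hS : ∑ i, ((∑ j, Tm i j * g j) * (∑ j, g j * Am i j))
      = ((Tm * Am).mulVec g) ⬝ᵥ g := by
    have e1 : ∑ i, ((∑ j, Tm i j * g j) * (∑ j, g j * Am i j))
        = (Tm.mulVec g) ⬝ᵥ (Am.mulVec g) := by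
      simp only [dotProduct, Matrix.mulVec]
      refine Finset.sum_congr rfl fun i _ => ?_
      congr 1
      refine Finset.sum_congr rfl fun j _ => mul_comm _ _
    rw [e1, dotProduct_mulVec]
    have e2 : (Tm.mulVec g) ᵥ* Am = Am.mulVec (Tm.mulVec g) := by
      conv_lhs => rw [← hAsym]
      rw [Matrix.vecMul_transpose]
    rw [e2, Matrix.mulVec_mulVec,
      show Am * Tm = Tm * Am from hTmdef ▸ commute_newton Am l]
  -- expand the target
  have hTnext : newtonOp n Am (l + 1) = σ • (1 : Matrix (Fin n) (Fin n) ℝ) - Tm * Am := rfl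
  have hgg : g ⬝ᵥ g = P ^ 2 := by
    rw [← hq2, hqfdef, dotProduct]
  have hsk : sigmaKappa n (l + 1) u x
      = (σ * P ^ 2 - ((Tm * Am).mulVec g) ⬝ᵥ g) / P ^ (l + 1 + 2) := by
    rw [sigmaKappa, ← hAmdef, ← hPdef, hTnext]
    congr 1
    rw [Matrix.sub_mulVec, sub_dotProduct, Matrix.smul_mulVec, Matrix.one_mulVec,
      smul_dotProduct]
    rw [show (fun i => gradient u x i) = g from rfl]
    rw [hgg]
    rfl
  -- assemble
  show (∑ i, fderiv ℝ (fun y => V y i) x (ee i)) = _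
  rw [Finset.sum_congr rfl fun i _ => hfdval i]
  have hsplit : ∀ i : Fin n,
      (∑ j, Tm i j * g j) *
          (-((P ^ (l + 1)) ^ 2)⁻¹ * ((((l : ℝ) + 1) * P ^ l) * ((1 / (2 * P)) *
            (∑ j, (g j * Am i j + g j * Am i j)))))
        + (P ^ (l + 1))⁻¹ *
          (∑ j, (Tm i j * Am i j
            + g j * fderiv ℝ (fun y => newtonOp n (hessianMatrix n u y) l i j) x (ee i)))
      = (-((P ^ (l + 1)) ^ 2)⁻¹ * (((l : ℝ) + 1) * P ^ l * (1 / (2 * P)) * 2))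
            * ((∑ j, Tm i j * g j) * (∑ j, g j * Am i j))
        + (P ^ (l + 1))⁻¹ * (∑ j, Tm i j * Am i j)
        + (P ^ (l + 1))⁻¹ *
            (∑ j, g j * fderiv ℝ (fun y => newtonOp n (hessianMatrix n u y) l i j) x (ee i)) := by
    intro i
    have h2w : ∑ j, (g j * Am i j + g j * Am i j) = 2 * ∑ j, g j * Am i j := by
      rw [Finset.sum_add_distrib]; ring
    have hTgsplit : (∑ j, (Tm i j * Am i j
          + g j * fderiv ℝ (fun y => newtonOp n (hessianMatrix n u y) l i j) x (ee i)))
        = (∑ j, Tm i j * Am i j)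
          + ∑ j, g j * fderiv ℝ (fun y => newtonOp n (hessianMatrix n u y) l i j) x (ee i) :=
      Finset.sum_add_distrib
    rw [h2w, hTgsplit]
    ring
  rw [Finset.sum_congr rfl fun i _ => hsplit i]
  rw [Finset.sum_add_distrib, Finset.sum_add_distrib]
  rw [← Finset.mul_sum, ← Finset.mul_sum, ← Finset.mul_sum]
  have hzero : ∑ i, (∑ j, g j * fderiv ℝ (fun y => newtonOp n (hessianMatrix n u y) l i j) x (ee i))
      = 0 := by
    rw [Finset.sum_comm]
    refine Finset.sum_eq_zero fun j _ => ?_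
    rw [← Finset.mul_sum, hdf j, mul_zero]
  have hTT : ∑ i, ∑ j, Tm i j * Am i j = ((l : ℝ) + 1) * σ := hStr
  rw [hzero, mul_zero, add_zero, hTT, hS, hsk]
  push_cast
  have hPne : P ≠ 0 := ne_of_gt hP0
  field_simp
  ring
end
end

section
/- Let n ≥ 1 and let A be a symmetric n×n real matrix whose upper-left (n−1)×(n−1) block is diagonal, i.e. A i j = 0 whenever i ≠ j and both i, j ≠ n (the last index); no condition is imposed on the last row and column. Then for every 0 ≤ r ≤ n−1, the (n,n) entry of T_r(A) equals the r-th elementary symmetric polynomial of the n−1 diagonal entries A 1 1, …, A (n−1) (n−1). (This is the computation proving Lemma 2.2 in a principal curvature frame: the off-block entries A i n do not contribute.) -/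
/-!
Up to sign, the Newton operators are the matrix coefficients of `adj(X·1 - A)`: comparing
coefficients in `adj(X·1 - A) * (X·1 - A) = χ_A(X)·1` gives exactly the recursion defining
`T_r`, starting from the leading coefficient `1`. The `(last, last)` entry of `adj(X·1 - A)` is
the principal minor of `X·1 - A` with the last row and column deleted; that minor is diagonal, so
the entry is `∏_{i ≠ last} (X - A i i)`, whose coefficients are the elementary symmetric
polynomials of the `A i i`.
-/

noncomputable section

open Polynomial Matrix Finset

theorem Finset.prod_X_sub_C_coeff {σ R : Type*} [CommRing R] (s : Finset σ) (r : σ → R) {k : ℕ}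
    (h : k ≤ #s) :
    (∏ i ∈ s, (X - C (r i))).coeff k
      = (-1) ^ (#s - k) * ∑ t ∈ s.powersetCard (#s - k), ∏ i ∈ t, r i := by
  simp_rw [sub_eq_add_neg, ← map_neg C, Finset.prod_X_add_C_coeff s _ h, Finset.mul_sum]
  refine Finset.sum_congr rfl fun t ht => ?_
  rw [Finset.prod_neg, (Finset.mem_powersetCard.mp ht).2]

namespace Matrix

variable {ι R : Type*} [Fintype ι] [DecidableEq ι] [CommRing R]

theorem adjugate_apply_self_eq_prod_diag (N : Matrix ι ι R) (L : ι)
    (h : ∀ i j, i ≠ j → i ≠ L → j ≠ L → N i j = 0) :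
    adjugate N L L = ∏ i ∈ univ.erase L, N i i := by
  rw [adjugate_apply, twoBlockTriangular_det _ (· ≠ L) fun i hi j hj => ?_]
  · have hdiag : toSquareBlockProp (N.updateRow L (Pi.single L 1)) (· ≠ L)
        = diagonal fun i : {i // i ≠ L} => N i i := by
      ext i j
      rw [toSquareBlockProp_def, of_apply, updateRow_ne i.2]
      by_cases hij : i = j
      · rw [hij, diagonal_apply_eq]
      · rw [h i j (Subtype.coe_injective.ne hij) i.2 j.2, diagonal_apply_ne _ hij]
    let _ : Unique {i // ¬ i ≠ L} := ⟨⟨⟨L, not_not.2 rfl⟩⟩, fun i => Subtype.ext (not_not.1 i.2)⟩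
    rw [hdiag, det_diagonal, det_unique, toSquareBlockProp_def, of_apply,
      Finset.prod_subtype (univ.erase L) (fun _ => mem_erase.trans (and_iff_left (mem_univ _)))]
    change _ * N.updateRow L (Pi.single L 1) L L = _
    rw [updateRow_self, Pi.single_eq_same, mul_one]
  · rw [not_not.1 hi, updateRow_self, Pi.single_eq_of_ne hj]

theorem adjugate_charmatrix_apply_self (M : Matrix ι ι R) (L : ι)
    (h : ∀ i j, i ≠ j → i ≠ L → j ≠ L → M i j = 0) :
    adjugate (charmatrix M) L L = ∏ i ∈ univ.erase L, (X - C (M i i)) := by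
  rw [adjugate_apply_self_eq_prod_diag _ L fun i j hij hi hj => ?_]
  · simp_rw [charmatrix_apply_eq]
  · rw [charmatrix_apply_ne _ _ _ hij, h i j hij hi hj, map_zero, neg_zero]

def adjCharmatrix (M : Matrix ι ι R) : (Matrix ι ι R)[X] :=
  matPolyEquiv (adjugate (charmatrix M))

theorem adjCharmatrix_mul_X_sub_C (M : Matrix ι ι R) :
    adjCharmatrix M * (X - C M) = M.charpoly.map (algebraMap R (Matrix ι ι R)) := by
  rw [adjCharmatrix, ← matPolyEquiv_charmatrix, ← map_mul, adjugate_mul]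
  exact matPolyEquiv_smul_one _

theorem coeff_adjCharmatrix_sub_mul (M : Matrix ι ι R) (k : ℕ) :
    (adjCharmatrix M).coeff k - (adjCharmatrix M).coeff (k + 1) * M
      = M.charpoly.coeff (k + 1) • 1 := by
  rw [← coeff_mul_X_sub_C, adjCharmatrix_mul_X_sub_C, coeff_map, Algebra.algebraMap_eq_smul_one]

theorem monic_adjCharmatrix (M : Matrix ι ι R) : (adjCharmatrix M).Monic :=
  (monic_X_sub_C M).of_mul_monic_right <| by
    rw [adjCharmatrix_mul_X_sub_C]
    exact (charpoly_monic M).map _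

theorem natDegree_adjCharmatrix_add_one [Nontrivial R] [Nonempty ι] (M : Matrix ι ι R) :
    (adjCharmatrix M).natDegree + 1 = Fintype.card ι := by
  have hdeg := congrArg natDegree (adjCharmatrix_mul_X_sub_C M)
  rwa [(monic_adjCharmatrix M).natDegree_mul (monic_X_sub_C M), natDegree_X_sub_C,
    (charpoly_monic M).natDegree_map, charpoly_natDegree_eq_dim] at hdeg

theorem coeff_adjCharmatrix_card_sub_one [Nontrivial R] [Nonempty ι] (M : Matrix ι ι R) :
    (adjCharmatrix M).coeff (Fintype.card ι - 1) = 1 := by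
  rw [← natDegree_adjCharmatrix_add_one M, Nat.add_sub_cancel]
  exact monic_adjCharmatrix M

end Matrix

theorem newtonOp_eq_neg_one_pow_smul_coeff_adjCharmatrix (n : ℕ) [NeZero n]
    (A : Matrix (Fin n) (Fin n) ℝ) {r : ℕ} (hr : r ≤ n - 1) :
    newtonOp n A r = (-1 : ℝ) ^ r • (adjCharmatrix A).coeff (n - 1 - r) := by
  induction r with
  | zero => simpa [newtonOp] using (coeff_adjCharmatrix_card_sub_one A).symm
  | succ r ih =>
    have hrec := coeff_adjCharmatrix_sub_mul A (n - 1 - (r + 1))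
    rw [show n - 1 - (r + 1) + 1 = n - 1 - r by omega, sub_eq_iff_eq_add] at hrec
    rw [newtonOp, ih (by omega), matSigma, show n - (r + 1) = n - 1 - r by omega, hrec,
      smul_mul_assoc]
    module

theorem newtonOp_last_last_general (n : ℕ)
    (A : Matrix (Fin n) (Fin n) ℝ)
    (last : Fin n)
    (hdiag : ∀ i j : Fin n, i ≠ j → i ≠ last → j ≠ last → A i j = 0)
    (r : ℕ) (hr : r ≤ n - 1) :
    newtonOp n A r last last
      = ∑ s ∈ Finset.powersetCard r (Finset.univ.erase last), ∏ i ∈ s, A i i := by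
  have : NeZero n := ⟨last.pos.ne'⟩
  have hcard : #(univ.erase last) = n - 1 := by simp
  rw [newtonOp_eq_neg_one_pow_smul_coeff_adjCharmatrix n A hr, Matrix.smul_apply, adjCharmatrix,
    matPolyEquiv_coeff_apply, adjugate_charmatrix_apply_self A last hdiag,
    prod_X_sub_C_coeff _ _ (by omega), hcard, show n - 1 - (n - 1 - r) = r by omega, smul_eq_mul,
    ← mul_assoc, ← mul_pow, neg_one_mul, neg_neg, one_pow, one_mul]

/-- principal curvature frame computation of Lemma 2.2: if the
symmetric matrix `A` is diagonal outside its last row and column, then the `(n,n)`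
entry of `T_r(A)` is the `r`-th elementary symmetric polynomial of the other
`n−1` diagonal entries. -/
theorem newtonOp_last_last (n : ℕ) (hn : 1 ≤ n)
    (A : Matrix (Fin n) (Fin n) ℝ) (hsymm : A.IsSymm)
    (last : Fin n) (hlast : (last : ℕ) = n - 1)
    (hdiag : ∀ i j : Fin n, i ≠ j → i ≠ last → j ≠ last → A i j = 0)
    (r : ℕ) (hr : r ≤ n - 1) :
    newtonOp n A r last last
      = ∑ s ∈ Finset.powersetCard r (Finset.univ.erase last), ∏ i ∈ s, A i i :=
  newtonOp_last_last_general n A last hdiag r hr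
end
end
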